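/- Let E be a finite row-finite directed graph, K a field, and A = L_K(E) or C_K(E) with its canonical ℤ-grading. If A is prime, then the degree-zero component of the center satisfies Z(A)_0 = K·1. Moreover, for any finite row-finite graph E, the degree-zero component Z(A)_0 of the center is finite-dimensional over K. -/

import Mathlib

/-! Basic infrastructure: directed graphs and their path algebras.

The path algebra `KE` is realized as the non-unital subalgebra generated by the
(images of the) vertices and edges inside the unital algebra `PA K E`, which is the
quotient of the free algebra on vertices and edges by the usual path-algebra
relations (vertices are orthogonal idempotents acting as local units on edges).
Words of composable edges are exactly the paths, so `KE` has the paths as a basis. -/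

/-- A directed graph `E = (E⁰, E¹, s, r)`. -/
structure DirGraph : Type 1 where
  V : Type
  Edge : Type
  s : Edge → V
  r : Edge → V

/-- A (non-unital, possibly non-closed) subset `S` of an algebra is *prime* if it is nonzero
and `a S b = 0` implies `a = 0` or `b = 0` for `a, b ∈ S`. -/
def IsPrimeSet {A : Type} [NonUnitalNonAssocSemiring A] (S : Set A) : Prop :=
  (∃ a ∈ S, a ≠ 0) ∧ ∀ a ∈ S, ∀ b ∈ S, (∀ x ∈ S, a * x * b = 0) → a = 0 ∨ b = 0

/-- `J` is a two-sided ideal of the (possibly non-unital) subalgebra with carrier `S`. -/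
def IsIdealOf (K : Type) [Field K] {A : Type} [Ring A] [Algebra K A] (S J : Set A) : Prop :=
  J ⊆ S ∧ (0 : A) ∈ J ∧ (∀ x ∈ J, ∀ y ∈ J, x + y ∈ J) ∧
    (∀ k : K, ∀ x ∈ J, k • x ∈ J) ∧ (∀ a ∈ S, ∀ x ∈ J, a * x ∈ J ∧ x * a ∈ J)

namespace DirGraph

/-- Generators of the path algebra: vertices and edges. -/
abbrev Gen (E : DirGraph) : Type := E.V ⊕ E.Edge

variable (K : Type) [Field K] (E : DirGraph)

/-- The defining relations of the path algebra: vertices are orthogonal idempotents,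
`s(e)·e = e`, `e·r(e) = e`, and all other vertex-edge products vanish. -/
inductive PathRel : FreeAlgebra K E.Gen → FreeAlgebra K E.Gen → Prop
  | vv_eq (u : E.V) :
      PathRel (FreeAlgebra.ι K (Sum.inl u) * FreeAlgebra.ι K (Sum.inl u))
        (FreeAlgebra.ι K (Sum.inl u))
  | vv_ne (u v : E.V) : u ≠ v →
      PathRel (FreeAlgebra.ι K (Sum.inl u) * FreeAlgebra.ι K (Sum.inl v)) 0
  | ve_eq (e : E.Edge) :
      PathRel (FreeAlgebra.ι K (Sum.inl (E.s e)) * FreeAlgebra.ι K (Sum.inr e))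
        (FreeAlgebra.ι K (Sum.inr e))
  | ve_ne (u : E.V) (e : E.Edge) : E.s e ≠ u →
      PathRel (FreeAlgebra.ι K (Sum.inl u) * FreeAlgebra.ι K (Sum.inr e)) 0
  | ev_eq (e : E.Edge) :
      PathRel (FreeAlgebra.ι K (Sum.inr e) * FreeAlgebra.ι K (Sum.inl (E.r e)))
        (FreeAlgebra.ι K (Sum.inr e))
  | ev_ne (e : E.Edge) (u : E.V) : E.r e ≠ u →
      PathRel (FreeAlgebra.ι K (Sum.inr e) * FreeAlgebra.ι K (Sum.inl u)) 0

/-- The ambient unital algebra (the unitalization of the path algebra). -/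
abbrev PA : Type := RingQuot (E.PathRel K)

/-- The image of a vertex in the path algebra. -/
noncomputable def vtx (u : E.V) : E.PA K :=
  RingQuot.mkAlgHom K (E.PathRel K) (FreeAlgebra.ι K (Sum.inl u))

/-- The image of an edge in the path algebra. -/
noncomputable def edg (e : E.Edge) : E.PA K :=
  RingQuot.mkAlgHom K (E.PathRel K) (FreeAlgebra.ι K (Sum.inr e))

/-- The path algebra `KE`: the (non-unital) subalgebra spanned by all paths, i.e.
generated by the vertices and edges. -/
noncomputable def KE : NonUnitalSubalgebra K (E.PA K) :=
  NonUnitalAlgebra.adjoin K (Set.range (E.vtx K) ∪ Set.range (E.edg K))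

/-- The center `Z(KE)` of the path algebra. -/
def relCenter : Set (E.PA K) :=
  {z | z ∈ E.KE K ∧ ∀ a ∈ E.KE K, a * z = z * a}

/-- `E.IsPathFrom u v l` : the list of edges `l` is a path from `u` to `v`
(`l = []` is the trivial path at `u = v`). -/
def IsPathFrom : E.V → E.V → List E.Edge → Prop
  | u, v, [] => u = v
  | u, v, e :: l => E.s e = u ∧ IsPathFrom (E.r e) v l

/-- The element of the path algebra corresponding to the path starting at `u`
with list of edges `l` (for `l = []` this is the vertex `u` itself). -/
noncomputable def pathElem (u : E.V) (l : List E.Edge) : E.PA K :=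
  E.vtx K u * (l.map (E.edg K)).prod

/-- The sum of all vertices: the unit of `KE` when `E⁰` is finite. -/
noncomputable def unitKE : E.PA K := ∑ᶠ u : E.V, E.vtx K u

/-- The scalar multiples `K·1` of the unit of `KE`. -/
noncomputable def scalarSet : Set (E.PA K) := Set.range fun k : K => k • E.unitKE K

/-- One step in the underlying undirected graph. -/
def Step (u v : E.V) : Prop :=
  (∃ e : E.Edge, E.s e = u ∧ E.r e = v) ∨ (∃ e : E.Edge, E.s e = v ∧ E.r e = u)

/-- `u ∼ v` : the vertices `u` and `v` are connected in the underlying undirected graph. -/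
def Connected (u v : E.V) : Prop := Relation.ReflTransGen E.Step u v

/-- The graph `E` is connected. -/
def IsConnectedGraph : Prop := ∀ u v : E.V, E.Connected u v

/-- The graph `E` is a cycle: `n ≥ 1` vertices `u₁, …, uₙ` and `n` edges `f₁, …, fₙ` with
`s(fᵢ) = uᵢ`, `r(fᵢ) = uᵢ₊₁` (indices mod `n`). -/
def IsCycleGraph : Prop :=
  ∃ n : ℕ, ∃ hn : 0 < n, ∃ (hv : Fin n ≃ E.V) (he : Fin n ≃ E.Edge),
    ∀ i : Fin n, E.s (he i) = hv i ∧ E.r (he i) = hv ⟨(i.1 + 1) % n, Nat.mod_lt _ hn⟩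

end DirGraph

namespace DirGraph

/-- The extended graph `Ê`: same vertices, edges `E¹ ⊕ (E¹)*`, where the ghost edge `e*`
(second component) has `s(e*) = r(e)` and `r(e*) = s(e)`. -/
def ext (E : DirGraph) : DirGraph where
  V := E.V
  Edge := E.Edge ⊕ E.Edge
  s := Sum.elim E.s E.r
  r := Sum.elim E.r E.s

variable (K : Type) [Field K] (E : DirGraph)

/-- Defining relations of the Cohn (`t = false`) and Leavitt (`t = true`) path algebras:
the path-algebra relations of the extended graph, the relations (CK1)
`e*e' = δ_{e,e'} r(e)`, and — only for `t = true` — the relations (CK2)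
`v = Σ_{s(e)=v} ee*` at every regular vertex `v`. -/
inductive CLRel : Bool → FreeAlgebra K E.ext.Gen → FreeAlgebra K E.ext.Gen → Prop
  | base (t : Bool) {a b : FreeAlgebra K E.ext.Gen} : E.ext.PathRel K a b → CLRel t a b
  | ck1_eq (t : Bool) (e : E.Edge) :
      CLRel t (FreeAlgebra.ι K (Sum.inr (Sum.inr e)) * FreeAlgebra.ι K (Sum.inr (Sum.inl e)))
        (FreeAlgebra.ι K (Sum.inl (E.r e)))
  | ck1_ne (t : Bool) (e f : E.Edge) : e ≠ f →
      CLRel t (FreeAlgebra.ι K (Sum.inr (Sum.inr e)) * FreeAlgebra.ι K (Sum.inr (Sum.inl f))) 0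
  | ck2 (v : E.V) (h : {e : E.Edge | E.s e = v}.Finite)
      (hne : {e : E.Edge | E.s e = v}.Nonempty) :
      CLRel true (FreeAlgebra.ι K (Sum.inl v))
        (h.toFinset.sum fun e =>
          FreeAlgebra.ι K (Sum.inr (Sum.inl e)) * FreeAlgebra.ι K (Sum.inr (Sum.inr e)))

/-- The ambient unital algebra containing the Cohn (`t = false`) or
Leavitt (`t = true`) path algebra. -/
abbrev CL (t : Bool) : Type := RingQuot (E.CLRel K t)

/-- The image of a vertex in `C_K(E)` / `L_K(E)`. -/
noncomputable def clvtx (t : Bool) (u : E.V) : E.CL K t :=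
  RingQuot.mkAlgHom K (E.CLRel K t) (FreeAlgebra.ι K (Sum.inl u))

/-- The image of a (real) edge in `C_K(E)` / `L_K(E)`. -/
noncomputable def cledg (t : Bool) (e : E.Edge) : E.CL K t :=
  RingQuot.mkAlgHom K (E.CLRel K t) (FreeAlgebra.ι K (Sum.inr (Sum.inl e)))

/-- The image of a ghost edge `e*` in `C_K(E)` / `L_K(E)`. -/
noncomputable def clghost (t : Bool) (e : E.Edge) : E.CL K t :=
  RingQuot.mkAlgHom K (E.CLRel K t) (FreeAlgebra.ι K (Sum.inr (Sum.inr e)))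

/-- The Cohn path algebra `C_K(E)` (`t = false`) or Leavitt path algebra `L_K(E)`
(`t = true`): the non-unital subalgebra generated by vertices, edges, and ghost edges. -/
noncomputable def clSub (t : Bool) : NonUnitalSubalgebra K (E.CL K t) :=
  NonUnitalAlgebra.adjoin K
    (Set.range (E.clvtx K t) ∪ Set.range (E.cledg K t) ∪ Set.range (E.clghost K t))

/-- The center of `C_K(E)` (`t = false`) or of `L_K(E)` (`t = true`). -/
def clCenter (t : Bool) : Set (E.CL K t) :=
  {z | z ∈ E.clSub K t ∧ ∀ a ∈ E.clSub K t, a * z = z * a}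

/-- The element `μ` of `C_K(E)` / `L_K(E)` for the path `μ` starting at `u` with edges `l`. -/
noncomputable def clPath (t : Bool) (u : E.V) (l : List E.Edge) : E.CL K t :=
  E.clvtx K t u * (l.map (E.cledg K t)).prod

/-- The element `μ*` of `C_K(E)` / `L_K(E)` for the path `μ` starting at `u` with edges `l`. -/
noncomputable def clPathStar (t : Bool) (u : E.V) (l : List E.Edge) : E.CL K t :=
  ((l.map (E.clghost K t)).reverse).prod * E.clvtx K t u

/-- The sum of all vertices: the unit of `C_K(E)` / `L_K(E)` when `E⁰` is finite. -/
noncomputable def clOne (t : Bool) : E.CL K t := ∑ᶠ u : E.V, E.clvtx K t u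

/-- The degree-zero component (w.r.t. the canonical ℤ-grading) of `C_K(E)` / `L_K(E)`:
the span of the elements `στ*` with `σ, τ` paths of equal length and common range. -/
def clDeg0 (t : Bool) : Submodule K (E.CL K t) :=
  Submodule.span K {x : E.CL K t | ∃ (u w v : E.V) (l m : List E.Edge),
    E.IsPathFrom u v l ∧ E.IsPathFrom w v m ∧ l.length = m.length ∧
    x = E.clPath K t u l * E.clPathStar K t w m}

/-- The span of the symmetric elements `μμ*`, `μ` a path of `E`. -/
def clSymmSpan (t : Bool) : Submodule K (E.CL K t) :=
  Submodule.span K {x : E.CL K t | ∃ (u v : E.V) (l : List E.Edge),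
    E.IsPathFrom u v l ∧ x = E.clPath K t u l * E.clPathStar K t u l}

/-- A subset `H ⊆ E⁰` is hereditary if paths starting in `H` end in `H`. -/
def Hereditary (H : Set E.V) : Prop :=
  ∀ (u v : E.V) (l : List E.Edge), E.IsPathFrom u v l → u ∈ H → v ∈ H

/-- The two-sided ideal of `C_K(E)` / `L_K(E)` generated by a subset `S₀`. -/
def clIdealGen (t : Bool) (S₀ : Set (E.CL K t)) : Set (E.CL K t) :=
  ⋂₀ {J : Set (E.CL K t) | IsIdealOf K (E.clSub K t : Set (E.CL K t)) J ∧ S₀ ⊆ J}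

/-- `c` is a cycle based at `u`: a nontrivial closed path visiting no vertex twice. -/
def IsCycle (u : E.V) (l : List E.Edge) : Prop :=
  l ≠ [] ∧ E.IsPathFrom u u l ∧ (l.map E.s).Nodup

/-- The (closed) path `l` has an exit. -/
def HasExit (l : List E.Edge) : Prop :=
  ∃ f : E.Edge, ∃ e ∈ l, E.s f = E.s e ∧ f ≠ e

/-- Condition (L): every cycle of `E` has an exit. -/
def CondL : Prop := ∀ (u : E.V) (l : List E.Edge), E.IsCycle u l → E.HasExit l

/-- The set of paths (given by their source and list of edges) that end at a vertex of the
cycle `c` and do not contain all the edges of `c`. -/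
def endsAtNotContaining (c : List E.Edge) : Set (E.V × List E.Edge) :=
  {p | (∃ v : E.V, (∃ e ∈ c, E.s e = v) ∧ E.IsPathFrom p.1 v p.2) ∧ ∃ e ∈ c, e ∉ p.2}

/-- `c` is the unique cycle of `E` without exits (uniqueness as a cycle: any cycle
without exits has the same edges as `c`). -/
def UniqueNoExitCycle (c : List E.Edge) : Prop :=
  (∃ u : E.V, E.IsCycle u c ∧ ¬ E.HasExit c) ∧
    ∀ (u' : E.V) (c' : List E.Edge), E.IsCycle u' c' → ¬ E.HasExit c' →
      ∀ e : E.Edge, e ∈ c' ↔ e ∈ c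

end DirGraph

/-!
Write `q_v = v - Σ_{s(e)=v} ee*`. By CK1, `q_v a q_v ∈ K q_v` for every `a ∈ A`, and for `a` of
degree zero, `g* a g ∈ K x` for every long enough path `g` ending at `x`. For central `z` this
says that `z` acts as a scalar on each `q_v`, and on each vertex `x` that is the range of
arbitrarily long paths.

If `A` is prime, pick a vertex `u ≠ 0`. Either some `q_x ≠ 0`, or every vertex is a sum of
`ee*` and nonzero paths from `u` of any length exist; either way `z` acts as a scalar `c` on
some nonzero `w`, and `w A (z - c·1) = 0` forces `z = c·1`.

In general `z v = z q_v + Σ_{s(e)=v} e (z r(e)) e*` determines `z v` from those scalars,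
recursing along edges into vertices that are not ranges of long paths; such vertices lie on no
cycle, so the recursion terminates and `Z(A)₀` embeds into a finite-dimensional space.
-/

lemma exists_dual_smul_eq_of_mem_span_singleton {K V : Type*} [Field K] [AddCommGroup V]
    [Module K V] (x : V) : ∃ φ : Module.Dual K V, ∀ y ∈ K ∙ x, φ y • x = y := by
  by_cases hx : x = 0
  · refine ⟨0, fun y hy => ?_⟩
    rw [hx, Submodule.span_singleton_eq_bot.2 rfl, Submodule.mem_bot] at hy
    rw [hy, hx, smul_zero]
  · obtain ⟨φ, hφ⟩ := Module.Projective.exists_dual_eq_one K hx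
    refine ⟨φ, fun y hy => ?_⟩
    obtain ⟨c, rfl⟩ := Submodule.mem_span_singleton.1 hy
    rw [map_smul, hφ, smul_eq_mul, mul_one]

namespace DirGraph

open scoped Classical

variable {K : Type} [Field K] {E : DirGraph} {t : Bool}

section Relations

private lemma mk_eq_mk_of_clRel {a b : FreeAlgebra K E.ext.Gen} (h : E.CLRel K t a b) :
    RingQuot.mkAlgHom K (E.CLRel K t) a = RingQuot.mkAlgHom K (E.CLRel K t) b :=
  RingQuot.mkAlgHom_rel K h

private lemma mk_eq_zero_of_clRel {a : FreeAlgebra K E.ext.Gen} (h : E.CLRel K t a 0) :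
    RingQuot.mkAlgHom K (E.CLRel K t) a = 0 := by
  rw [mk_eq_mk_of_clRel h, map_zero]

lemma clvtx_mul_clvtx (u w : E.V) :
    E.clvtx K t u * E.clvtx K t w = if u = w then E.clvtx K t u else 0 := by
  rw [clvtx, clvtx, ← map_mul]
  split_ifs with h
  · subst h; exact mk_eq_mk_of_clRel (CLRel.base t (PathRel.vv_eq (K := K) (E := E.ext) u))
  · exact mk_eq_zero_of_clRel (CLRel.base t (PathRel.vv_ne (K := K) (E := E.ext) u w h))

lemma clvtx_mul_cledg (u : E.V) (e : E.Edge) :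
    E.clvtx K t u * E.cledg K t e = if u = E.s e then E.cledg K t e else 0 := by
  rw [clvtx, cledg, ← map_mul]
  split_ifs with h
  · subst h
    exact mk_eq_mk_of_clRel (CLRel.base t (PathRel.ve_eq (K := K) (E := E.ext) (Sum.inl e)))
  · exact mk_eq_zero_of_clRel
      (CLRel.base t (PathRel.ve_ne (K := K) (E := E.ext) u (Sum.inl e) (Ne.symm h)))

lemma cledg_mul_clvtx (e : E.Edge) (u : E.V) :
    E.cledg K t e * E.clvtx K t u = if u = E.r e then E.cledg K t e else 0 := by
  rw [clvtx, cledg, ← map_mul]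
  split_ifs with h
  · subst h
    exact mk_eq_mk_of_clRel (CLRel.base t (PathRel.ev_eq (K := K) (E := E.ext) (Sum.inl e)))
  · exact mk_eq_zero_of_clRel
      (CLRel.base t (PathRel.ev_ne (K := K) (E := E.ext) (Sum.inl e) u (Ne.symm h)))

lemma clvtx_mul_clghost (u : E.V) (e : E.Edge) :
    E.clvtx K t u * E.clghost K t e = if u = E.r e then E.clghost K t e else 0 := by
  rw [clvtx, clghost, ← map_mul]
  split_ifs with h
  · subst h
    exact mk_eq_mk_of_clRel (CLRel.base t (PathRel.ve_eq (K := K) (E := E.ext) (Sum.inr e)))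
  · exact mk_eq_zero_of_clRel
      (CLRel.base t (PathRel.ve_ne (K := K) (E := E.ext) u (Sum.inr e) (Ne.symm h)))

lemma clghost_mul_clvtx (e : E.Edge) (u : E.V) :
    E.clghost K t e * E.clvtx K t u = if u = E.s e then E.clghost K t e else 0 := by
  rw [clvtx, clghost, ← map_mul]
  split_ifs with h
  · subst h
    exact mk_eq_mk_of_clRel (CLRel.base t (PathRel.ev_eq (K := K) (E := E.ext) (Sum.inr e)))
  · exact mk_eq_zero_of_clRel
      (CLRel.base t (PathRel.ev_ne (K := K) (E := E.ext) (Sum.inr e) u (Ne.symm h)))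

lemma clghost_mul_cledg (e f : E.Edge) :
    E.clghost K t e * E.cledg K t f = if e = f then E.clvtx K t (E.r e) else 0 := by
  rw [clvtx, cledg, clghost, ← map_mul]
  split_ifs with h
  · subst h; exact mk_eq_mk_of_clRel (CLRel.ck1_eq t e)
  · exact mk_eq_zero_of_clRel (CLRel.ck1_ne t e f h)

lemma clvtx_mem (u : E.V) : E.clvtx K t u ∈ E.clSub K t :=
  NonUnitalAlgebra.subset_adjoin K (Or.inl (Or.inl ⟨u, rfl⟩))

lemma cledg_mem (e : E.Edge) : E.cledg K t e ∈ E.clSub K t :=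
  NonUnitalAlgebra.subset_adjoin K (Or.inl (Or.inr ⟨e, rfl⟩))

lemma clghost_mem (e : E.Edge) : E.clghost K t e ∈ E.clSub K t :=
  NonUnitalAlgebra.subset_adjoin K (Or.inr ⟨e, rfl⟩)

end Relations

section Paths

lemma isPathFrom_nil {u v : E.V} : E.IsPathFrom u v [] ↔ u = v := Iff.rfl

lemma IsPathFrom.append {u v w : E.V} {l m : List E.Edge}
    (h1 : E.IsPathFrom u v l) (h2 : E.IsPathFrom v w m) : E.IsPathFrom u w (l ++ m) := by
  induction l generalizing u with
  | nil => rw [isPathFrom_nil] at h1; subst h1; exact h2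
  | cons e l ih => exact ⟨h1.1, ih h1.2⟩

lemma isPathFrom_singleton (e : E.Edge) : E.IsPathFrom (E.s e) (E.r e) [e] := ⟨rfl, rfl⟩

lemma clPath_nil (u : E.V) : E.clPath K t u [] = E.clvtx K t u := by
  simp [clPath]

lemma clPathStar_nil (u : E.V) : E.clPathStar K t u [] = E.clvtx K t u := by
  simp [clPathStar]

lemma clPath_cons {e : E.Edge} {u : E.V} (h : E.s e = u) (l : List E.Edge) :
    E.clPath K t u (e :: l) = E.cledg K t e * E.clPath K t (E.r e) l := by
  subst h
  rw [clPath, clPath, List.map_cons, List.prod_cons, ← mul_assoc, clvtx_mul_cledg, if_pos rfl,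
    ← mul_assoc, cledg_mul_clvtx, if_pos rfl]

lemma clPathStar_cons {e : E.Edge} {u : E.V} (h : E.s e = u) (l : List E.Edge) :
    E.clPathStar K t u (e :: l) = E.clPathStar K t (E.r e) l * E.clghost K t e := by
  subst h
  rw [clPathStar, clPathStar, List.map_cons, List.reverse_cons, List.prod_append,
    List.prod_cons, List.prod_nil, mul_one, mul_assoc, mul_assoc, clghost_mul_clvtx, if_pos rfl,
    clvtx_mul_clghost, if_pos rfl]

lemma clvtx_mul_clPath (w u : E.V) (l : List E.Edge) :
    E.clvtx K t w * E.clPath K t u l = if w = u then E.clPath K t u l else 0 := by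
  rw [clPath, ← mul_assoc, clvtx_mul_clvtx]
  split_ifs with h
  · rw [h]
  · rw [zero_mul]

lemma clPathStar_mul_clvtx (u : E.V) (l : List E.Edge) (w : E.V) :
    E.clPathStar K t u l * E.clvtx K t w = if w = u then E.clPathStar K t u l else 0 := by
  rw [clPathStar, mul_assoc, clvtx_mul_clvtx]
  by_cases h : w = u
  · subst h; rw [if_pos rfl, if_pos rfl, ← clPathStar]
  · rw [if_neg (Ne.symm h), if_neg h, mul_zero]

lemma clPath_mul_clvtx {u v : E.V} {l : List E.Edge} (h : E.IsPathFrom u v l) :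
    E.clPath K t u l * E.clvtx K t v = E.clPath K t u l := by
  induction l generalizing u with
  | nil =>
    rw [isPathFrom_nil] at h; subst h
    rw [clPath_nil, clvtx_mul_clvtx, if_pos rfl]
  | cons e l ih => rw [clPath_cons h.1, mul_assoc, ih h.2]

lemma clPathStar_mul_clPath_self {u v : E.V} {l : List E.Edge} (h : E.IsPathFrom u v l) :
    E.clPathStar K t u l * E.clPath K t u l = E.clvtx K t v := by
  induction l generalizing u with
  | nil =>
    rw [isPathFrom_nil] at h; subst h
    rw [clPathStar_nil, clPath_nil, clvtx_mul_clvtx, if_pos rfl]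
  | cons e l ih =>
    rw [clPathStar_cons h.1, clPath_cons h.1, mul_assoc, ← mul_assoc (E.clghost K t e),
      clghost_mul_cledg, if_pos rfl, clvtx_mul_clPath, if_pos rfl, ih h.2]

lemma clPath_append {u v : E.V} {l m : List E.Edge}
    (h1 : E.IsPathFrom u v l) :
    E.clPath K t u (l ++ m) = E.clPath K t u l * E.clPath K t v m := by
  induction l generalizing u with
  | nil =>
    rw [isPathFrom_nil] at h1; subst h1
    rw [List.nil_append, clPath_nil, clvtx_mul_clPath, if_pos rfl]
  | cons e l ih =>
    rw [List.cons_append, clPath_cons h1.1, clPath_cons h1.1, ih h1.2, mul_assoc]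

lemma clPathStar_append {u v : E.V} {l m : List E.Edge}
    (h1 : E.IsPathFrom u v l) :
    E.clPathStar K t u (l ++ m) = E.clPathStar K t v m * E.clPathStar K t u l := by
  induction l generalizing u with
  | nil =>
    rw [isPathFrom_nil] at h1; subst h1
    rw [List.nil_append, clPathStar_nil, clPathStar_mul_clvtx, if_pos rfl]
  | cons e l ih =>
    rw [List.cons_append, clPathStar_cons h1.1, clPathStar_cons h1.1, ih h1.2, mul_assoc]

lemma clPath_concat {u v : E.V} {l : List E.Edge} (h : E.IsPathFrom u v l) {e : E.Edge}
    (he : E.s e = v) : E.clPath K t u (l ++ [e]) = E.clPath K t u l * E.cledg K t e := by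
  rw [clPath_append h, clPath_cons he, clPath_nil, cledg_mul_clvtx, if_pos rfl]

lemma clPath_mem {u v : E.V} {l : List E.Edge} (h : E.IsPathFrom u v l) :
    E.clPath K t u l ∈ E.clSub K t := by
  induction l generalizing u with
  | nil => rw [clPath_nil]; exact clvtx_mem u
  | cons e l ih => rw [clPath_cons h.1]; exact mul_mem (cledg_mem e) (ih h.2)

lemma clPathStar_mul_clPath {w v u v' : E.V} {m l : List E.Edge}
    (hm : E.IsPathFrom w v m) (hl : E.IsPathFrom u v' l) :
    (∃ l₂, l = m ++ l₂ ∧ E.IsPathFrom v v' l₂ ∧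
       E.clPathStar K t w m * E.clPath K t u l = E.clPath K t v l₂) ∨
    (∃ m₂, m = l ++ m₂ ∧ E.IsPathFrom v' v m₂ ∧
       E.clPathStar K t w m * E.clPath K t u l = E.clPathStar K t v' m₂) ∨
    E.clPathStar K t w m * E.clPath K t u l = 0 := by
  induction m generalizing l u w v' with
  | nil =>
    rw [isPathFrom_nil] at hm; subst hm
    by_cases h : w = u
    · subst h
      exact Or.inl ⟨l, rfl, hl, by rw [clPathStar_nil, clvtx_mul_clPath, if_pos rfl]⟩
    · exact Or.inr (Or.inr (by rw [clPathStar_nil, clvtx_mul_clPath, if_neg h]))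
  | cons e m' ih =>
    obtain ⟨he, hm'⟩ := hm
    rw [clPathStar_cons he]
    cases l with
    | nil =>
      rw [isPathFrom_nil] at hl; subst hl
      rw [clPath_nil, mul_assoc, clghost_mul_clvtx]
      split_ifs with h
      · exact Or.inr (Or.inl ⟨e :: m', rfl, ⟨h.symm, hm'⟩, (clPathStar_cons h.symm m').symm⟩)
      · exact Or.inr (Or.inr (mul_zero _))
    | cons f l' =>
      obtain ⟨hf, hl'⟩ := hl
      rw [clPath_cons hf, mul_assoc, ← mul_assoc (E.clghost K t e), clghost_mul_cledg]
      split_ifs with hef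
      · subst hef
        rw [clvtx_mul_clPath, if_pos rfl]
        rcases ih hm' hl' with ⟨l₂, h1, h2, h3⟩ | ⟨m₂, h1, h2, h3⟩ | h0
        · exact Or.inl ⟨l₂, by rw [h1, List.cons_append], h2, h3⟩
        · exact Or.inr (Or.inl ⟨m₂, by rw [h1, List.cons_append], h2, h3⟩)
        · exact Or.inr (Or.inr h0)
      · exact Or.inr (Or.inr (by rw [zero_mul, mul_zero]))

lemma clPathStar_mul_clPath_of_length_le {w v u v' : E.V} {m l : List E.Edge}
    (hm : E.IsPathFrom w v m) (hl : E.IsPathFrom u v' l) (hlen : l.length ≤ m.length) :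
    E.clPathStar K t w m * E.clPath K t u l = 0 ∨
    ∃ m₂, m = l ++ m₂ ∧ E.IsPathFrom v' v m₂ ∧
       E.clPathStar K t w m * E.clPath K t u l = E.clPathStar K t v' m₂ := by
  rcases clPathStar_mul_clPath (K := K) (t := t) hm hl with ⟨l₂, h1, h2, h3⟩ | h | h
  · obtain rfl : l₂ = [] := by
      apply List.eq_nil_of_length_eq_zero
      have := congrArg List.length h1
      rw [List.length_append] at this
      omega
    rw [isPathFrom_nil] at h2; subst h2
    exact Or.inr ⟨[], by rw [h1, List.append_nil, List.append_nil], rfl,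
      by rw [h3, clPath_nil, clPathStar_nil]⟩
  · exact Or.inr h
  · exact Or.inl h

lemma clPathStar_mul_clPath_of_le_length {w v u v' : E.V} {m l : List E.Edge}
    (hm : E.IsPathFrom w v m) (hl : E.IsPathFrom u v' l) (hlen : m.length ≤ l.length) :
    E.clPathStar K t w m * E.clPath K t u l = 0 ∨
    ∃ l₂, l = m ++ l₂ ∧ E.IsPathFrom v v' l₂ ∧
       E.clPathStar K t w m * E.clPath K t u l = E.clPath K t v l₂ := by
  rcases clPathStar_mul_clPath (K := K) (t := t) hm hl with h | ⟨m₂, h1, h2, h3⟩ | h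
  · exact Or.inr h
  · obtain rfl : m₂ = [] := by
      apply List.eq_nil_of_length_eq_zero
      have := congrArg List.length h1
      rw [List.length_append] at this
      omega
    rw [isPathFrom_nil] at h2; subst h2
    exact Or.inr ⟨[], by rw [h1, List.append_nil, List.append_nil], rfl,
      by rw [h3, clPath_nil, clPathStar_nil]⟩
  · exact Or.inl h

end Paths

section Monomials

variable (K E t) in
def clMonomials : Set (E.CL K t) :=
  {x | ∃ (u w v : E.V) (l m : List E.Edge),
    E.IsPathFrom u v l ∧ E.IsPathFrom w v m ∧ x = E.clPath K t u l * E.clPathStar K t w m}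

lemma mul_mem_span_clMonomials {x y : E.CL K t} (hx : x ∈ E.clMonomials K t)
    (hy : y ∈ E.clMonomials K t) : x * y ∈ Submodule.span K (E.clMonomials K t) := by
  obtain ⟨u, w, v, l, m, hl, hm, rfl⟩ := hx
  obtain ⟨u', w', v₂, l', m', hl', hm', rfl⟩ := hy
  rw [mul_assoc, ← mul_assoc (E.clPathStar K t w m)]
  rcases clPathStar_mul_clPath (K := K) (t := t) hm hl' with
    ⟨l₂, -, hp2, heq⟩ | ⟨m₂, -, hp2, heq⟩ | h0
  · rw [heq, ← mul_assoc, ← clPath_append hl]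
    exact Submodule.subset_span ⟨u, w', v₂, l ++ l₂, m', hl.append hp2, hm', rfl⟩
  · rw [heq, ← clPathStar_append hm']
    exact Submodule.subset_span ⟨u, w', v, l, m' ++ m₂, hl, hm'.append hp2, rfl⟩
  · rw [h0, zero_mul, mul_zero]
    exact zero_mem _

lemma mem_span_clMonomials {a : E.CL K t} (ha : a ∈ E.clSub K t) :
    a ∈ Submodule.span K (E.clMonomials K t) := by
  induction ha using NonUnitalAlgebra.adjoin_induction with
  | mem x hx =>
    rcases hx with (⟨u, rfl⟩ | ⟨e, rfl⟩) | ⟨e, rfl⟩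
    · refine Submodule.subset_span ⟨u, u, u, [], [], rfl, rfl, ?_⟩
      rw [clPath_nil, clPathStar_nil, clvtx_mul_clvtx, if_pos rfl]
    · refine Submodule.subset_span ⟨E.s e, E.r e, E.r e, [e], [], isPathFrom_singleton e, rfl, ?_⟩
      rw [clPathStar_nil, clPath_mul_clvtx (isPathFrom_singleton e), clPath_cons rfl, clPath_nil,
        cledg_mul_clvtx, if_pos rfl]
    · refine Submodule.subset_span ⟨E.r e, E.s e, E.r e, [], [e], rfl, isPathFrom_singleton e, ?_⟩
      rw [clPathStar_cons rfl, clPathStar_nil, clPath_nil, ← mul_assoc, clvtx_mul_clvtx,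
        if_pos rfl, clvtx_mul_clghost, if_pos rfl]
  | add x y _ _ hx hy => exact add_mem hx hy
  | zero => exact zero_mem _
  | mul x y _ _ hx hy =>
    have hxy := Submodule.mul_mem_mul hx hy
    rw [Submodule.span_mul_span] at hxy
    refine Submodule.span_le.2 ?_ hxy
    rintro _ ⟨a, ha, b, hb, rfl⟩
    exact mul_mem_span_clMonomials ha hb
  | smul r x _ hx => exact Submodule.smul_mem _ _ hx

end Monomials

lemma clvtx_mem_clDeg0 (u : E.V) : E.clvtx K t u ∈ E.clDeg0 K t := by
  refine Submodule.subset_span ⟨u, u, u, [], [], rfl, rfl, rfl, ?_⟩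
  rw [clPath_nil, clPathStar_nil, clvtx_mul_clvtx, if_pos rfl]

section Unit

variable [Fintype E.V]

lemma clOne_eq_sum : E.clOne K t = ∑ u, E.clvtx K t u := finsum_eq_sum_of_fintype _

lemma clOne_mem : E.clOne K t ∈ E.clSub K t := by
  rw [clOne_eq_sum]
  exact sum_mem fun u _ => clvtx_mem u

lemma mul_clOne_and_clOne_mul {a : E.CL K t} (ha : a ∈ E.clSub K t) :
    a * E.clOne K t = a ∧ E.clOne K t * a = a := by
  induction ha using NonUnitalAlgebra.adjoin_induction with
  | mem x hx =>
    rcases hx with (⟨u, rfl⟩ | ⟨e, rfl⟩) | ⟨e, rfl⟩ <;>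
      simp [clOne_eq_sum, Finset.mul_sum, Finset.sum_mul, clvtx_mul_clvtx, clvtx_mul_cledg,
        cledg_mul_clvtx, clvtx_mul_clghost, clghost_mul_clvtx]
  | add x y _ _ hx hy => exact ⟨by rw [add_mul, hx.1, hy.1], by rw [mul_add, hx.2, hy.2]⟩
  | zero => exact ⟨zero_mul _, mul_zero _⟩
  | mul x y _ _ hx hy => exact ⟨by rw [mul_assoc, hy.1], by rw [← mul_assoc, hx.2]⟩
  | smul r x _ hx => exact ⟨by rw [smul_mul_assoc, hx.1], by rw [mul_smul_comm, hx.2]⟩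

lemma mul_clOne {a : E.CL K t} (ha : a ∈ E.clSub K t) : a * E.clOne K t = a :=
  (mul_clOne_and_clOne_mul ha).1

lemma clOne_mul {a : E.CL K t} (ha : a ∈ E.clSub K t) : E.clOne K t * a = a :=
  (mul_clOne_and_clOne_mul ha).2

lemma smul_clOne_mem_clCenter (c : K) : c • E.clOne K t ∈ E.clCenter K t :=
  ⟨SMulMemClass.smul_mem c clOne_mem, fun a ha => by
    rw [mul_smul_comm, smul_mul_assoc, mul_clOne ha, clOne_mul ha]⟩

lemma smul_clOne_mem_clDeg0 (c : K) : c • E.clOne K t ∈ E.clDeg0 K t := by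
  rw [clOne_eq_sum]
  exact Submodule.smul_mem _ _ (sum_mem fun u _ => clvtx_mem_clDeg0 u)

end Unit

section Defect

variable (K E t) in
/-- `q_v`; CK2 says exactly that it vanishes in `L_K(E)` at regular vertices. -/
noncomputable def ck2Defect (v : E.V) (h : {e : E.Edge | E.s e = v}.Finite) : E.CL K t :=
  E.clvtx K t v - ∑ e ∈ h.toFinset, E.cledg K t e * E.clghost K t e

variable {v : E.V} (h : {e : E.Edge | E.s e = v}.Finite)

lemma clvtx_eq_ck2Defect_add :
    E.clvtx K t v = E.ck2Defect K t v h + ∑ e ∈ h.toFinset, E.cledg K t e * E.clghost K t e :=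
  (sub_add_cancel _ _).symm

lemma ck2Defect_mem : E.ck2Defect K t v h ∈ E.clSub K t :=
  sub_mem (clvtx_mem v) (sum_mem fun e _ => mul_mem (cledg_mem e) (clghost_mem e))

lemma ck2Defect_mul_clvtx (u : E.V) :
    E.ck2Defect K t v h * E.clvtx K t u = if u = v then E.ck2Defect K t v h else 0 := by
  have hsum : (∑ e ∈ h.toFinset, E.cledg K t e * E.clghost K t e) * E.clvtx K t u =
      if u = v then ∑ e ∈ h.toFinset, E.cledg K t e * E.clghost K t e else 0 := by
    rw [Finset.sum_mul]
    split_ifs with hu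
    · refine Finset.sum_congr rfl fun e he => ?_
      rw [mul_assoc, clghost_mul_clvtx, if_pos (hu.trans (h.mem_toFinset.1 he).symm)]
    · refine Finset.sum_eq_zero fun e he => ?_
      rw [mul_assoc, clghost_mul_clvtx, if_neg fun hh => hu (hh.trans (h.mem_toFinset.1 he)),
        mul_zero]
  rw [ck2Defect, sub_mul, hsum, clvtx_mul_clvtx]
  by_cases hu : u = v
  · subst hu; simp only [if_true]
  · rw [if_neg (Ne.symm hu), if_neg hu, if_neg hu, sub_zero]

lemma clvtx_mul_ck2Defect (u : E.V) :
    E.clvtx K t u * E.ck2Defect K t v h = if u = v then E.ck2Defect K t v h else 0 := by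
  have hsum : E.clvtx K t u * (∑ e ∈ h.toFinset, E.cledg K t e * E.clghost K t e) =
      if u = v then ∑ e ∈ h.toFinset, E.cledg K t e * E.clghost K t e else 0 := by
    rw [Finset.mul_sum]
    split_ifs with hu
    · refine Finset.sum_congr rfl fun e he => ?_
      rw [← mul_assoc, clvtx_mul_cledg, if_pos (hu.trans (h.mem_toFinset.1 he).symm)]
    · refine Finset.sum_eq_zero fun e he => ?_
      rw [← mul_assoc, clvtx_mul_cledg, if_neg fun hh => hu (hh.trans (h.mem_toFinset.1 he)),
        zero_mul]
  rw [ck2Defect, mul_sub, hsum, clvtx_mul_clvtx]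
  split_ifs with hu
  · rw [hu]
  · rw [sub_zero]

lemma ck2Defect_mul_cledg (f : E.Edge) : E.ck2Defect K t v h * E.cledg K t f = 0 := by
  have hterm : ∀ e ∈ h.toFinset, E.cledg K t e * E.clghost K t e * E.cledg K t f =
      if e = f then E.cledg K t f else 0 := by
    intro e _
    rw [mul_assoc, clghost_mul_cledg]
    split_ifs with hef
    · subst hef; rw [cledg_mul_clvtx, if_pos rfl]
    · rw [mul_zero]
  rw [ck2Defect, sub_mul, Finset.sum_mul, clvtx_mul_cledg, Finset.sum_congr rfl hterm,
    Finset.sum_ite_eq' h.toFinset f]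
  by_cases hf : E.s f = v
  · rw [if_pos hf.symm, if_pos (h.mem_toFinset.2 hf), sub_self]
  · rw [if_neg (Ne.symm hf), if_neg (mt h.mem_toFinset.1 hf), sub_zero]

lemma clghost_mul_ck2Defect (f : E.Edge) : E.clghost K t f * E.ck2Defect K t v h = 0 := by
  have hterm : ∀ e ∈ h.toFinset, E.clghost K t f * (E.cledg K t e * E.clghost K t e) =
      if f = e then E.clghost K t f else 0 := by
    intro e _
    rw [← mul_assoc, clghost_mul_cledg]
    split_ifs with hef
    · subst hef; rw [clvtx_mul_clghost, if_pos rfl]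
    · rw [zero_mul]
  rw [ck2Defect, mul_sub, Finset.mul_sum, clghost_mul_clvtx, Finset.sum_congr rfl hterm,
    Finset.sum_ite_eq h.toFinset f]
  by_cases hf : E.s f = v
  · rw [if_pos hf.symm, if_pos (h.mem_toFinset.2 hf), sub_self]
  · rw [if_neg (Ne.symm hf), if_neg (mt h.mem_toFinset.1 hf), sub_zero]

lemma ck2Defect_mul_self : E.ck2Defect K t v h * E.ck2Defect K t v h = E.ck2Defect K t v h := by
  nth_rewrite 2 [ck2Defect]
  rw [mul_sub, Finset.mul_sum, ck2Defect_mul_clvtx, if_pos rfl]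
  simp_rw [← mul_assoc, ck2Defect_mul_cledg, zero_mul, Finset.sum_const_zero, sub_zero]

lemma ck2Defect_mul_clPath {u v' : E.V} {l : List E.Edge} (hl : E.IsPathFrom u v' l) :
    E.ck2Defect K t v h * E.clPath K t u l = if l = [] ∧ u = v then E.ck2Defect K t v h else 0 := by
  cases l with
  | nil => simp [clPath_nil, ck2Defect_mul_clvtx]
  | cons e l => rw [clPath_cons hl.1, ← mul_assoc, ck2Defect_mul_cledg, zero_mul, if_neg (by simp)]

lemma clPathStar_mul_ck2Defect {u v' : E.V} {l : List E.Edge} (hl : E.IsPathFrom u v' l) :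
    E.clPathStar K t u l * E.ck2Defect K t v h =
      if l = [] ∧ u = v then E.ck2Defect K t v h else 0 := by
  cases l with
  | nil => simp [clPathStar_nil, clvtx_mul_ck2Defect]
  | cons e l =>
    rw [clPathStar_cons hl.1, mul_assoc, clghost_mul_ck2Defect, mul_zero, if_neg (by simp)]

lemma ck2Defect_mul_mul_ck2Defect_mem {a : E.CL K t} (ha : a ∈ E.clSub K t) :
    E.ck2Defect K t v h * a * E.ck2Defect K t v h ∈ K ∙ E.ck2Defect K t v h := by
  set q := E.ck2Defect K t v h
  suffices Submodule.span K (E.clMonomials K t) ≤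
      (K ∙ q).comap (LinearMap.mulLeft K q ∘ₗ LinearMap.mulRight K q) by
    simpa [mul_assoc] using this (mem_span_clMonomials ha)
  rw [Submodule.span_le]
  rintro _ ⟨u, w, v₀, l, m, hl, hm, rfl⟩
  simp only [SetLike.mem_coe, Submodule.mem_comap, LinearMap.comp_apply,
    LinearMap.mulRight_apply, LinearMap.mulLeft_apply]
  rw [← mul_assoc, ← mul_assoc, mul_assoc (q * _), ck2Defect_mul_clPath h hl,
    clPathStar_mul_ck2Defect h hm]
  split_ifs
  · rw [ck2Defect_mul_self]; exact Submodule.mem_span_singleton_self q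
  all_goals simp

lemma mul_ck2Defect_mem {z : E.CL K t} (hz : z ∈ E.clCenter K t) :
    z * E.ck2Defect K t v h ∈ K ∙ E.ck2Defect K t v h := by
  have hq : z * E.ck2Defect K t v h =
      E.ck2Defect K t v h * z * E.ck2Defect K t v h := by
    conv_lhs => rw [← ck2Defect_mul_self h]
    rw [← mul_assoc, ← hz.2 _ (ck2Defect_mem h)]
  rw [hq]
  exact ck2Defect_mul_mul_ck2Defect_mem h hz.1

end Defect

section LongPaths

lemma clPathStar_mul_mul_clPath_mem_of_mem_clDeg0 {a : E.CL K t} (ha : a ∈ E.clDeg0 K t) :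
    ∃ n : ℕ, ∀ (x₀ x : E.V) (g : List E.Edge), E.IsPathFrom x₀ x g → n ≤ g.length →
      E.clPathStar K t x₀ g * a * E.clPath K t x₀ g ∈ K ∙ E.clvtx K t x := by
  induction ha using Submodule.span_induction with
  | mem a ha =>
    obtain ⟨u, w, v, l, m, hl, hm, hlm, rfl⟩ := ha
    refine ⟨l.length, fun x₀ x g hg hlen => ?_⟩
    rw [← mul_assoc, mul_assoc (E.clPathStar K t x₀ g * E.clPath K t u l)]
    -- `g = l ++ g₁ = m ++ g₁`, so the product is `g₁* g₁ = x`
    rcases clPathStar_mul_clPath_of_length_le (K := K) (t := t) hg hl hlen with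
      h0 | ⟨g₁, hg₁, hp₁, h₁⟩
    · rw [h0, zero_mul]; exact zero_mem _
    rcases clPathStar_mul_clPath_of_le_length (K := K) (t := t) hm hg (hlm ▸ hlen) with
      h0 | ⟨g₂, hg₂, -, h₂⟩
    · rw [h0, mul_zero]; exact zero_mem _
    obtain rfl : g₁ = g₂ := (List.append_inj (hg₁.symm.trans hg₂) hlm).2
    rw [h₁, h₂, clPathStar_mul_clPath_self hp₁]
    exact Submodule.mem_span_singleton_self _
  | zero => exact ⟨0, fun _ _ _ _ _ => by rw [mul_zero, zero_mul]; exact zero_mem _⟩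
  | add a b _ _ ha hb =>
    obtain ⟨n₁, ha⟩ := ha
    obtain ⟨n₂, hb⟩ := hb
    refine ⟨max n₁ n₂, fun x₀ x g hg hlen => ?_⟩
    rw [mul_add, add_mul]
    exact add_mem (ha x₀ x g hg (le_of_max_le_left hlen)) (hb x₀ x g hg (le_of_max_le_right hlen))
  | smul r a _ ha =>
    obtain ⟨n, ha⟩ := ha
    refine ⟨n, fun x₀ x g hg hlen => ?_⟩
    rw [mul_smul_comm, smul_mul_assoc]
    exact Submodule.smul_mem _ _ (ha x₀ x g hg hlen)

lemma mul_clvtx_mem_of_mem_clDeg0 {z : E.CL K t} (hzc : z ∈ E.clCenter K t)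
    (hz0 : z ∈ E.clDeg0 K t) :
    ∃ n : ℕ, ∀ (x₀ x : E.V) (g : List E.Edge), E.IsPathFrom x₀ x g → n ≤ g.length →
      z * E.clvtx K t x ∈ K ∙ E.clvtx K t x := by
  obtain ⟨n, hn⟩ := clPathStar_mul_mul_clPath_mem_of_mem_clDeg0 hz0
  refine ⟨n, fun x₀ x g hg hlen => ?_⟩
  have hx : z * E.clvtx K t x = E.clPathStar K t x₀ g * z * E.clPath K t x₀ g := by
    rw [mul_assoc, ← hzc.2 _ (clPath_mem hg), ← mul_assoc, clPathStar_mul_clPath_self hg,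
      hzc.2 _ (clvtx_mem x)]
  rw [hx]
  exact hn x₀ x g hg hlen

end LongPaths

lemma exists_mul_cledg_ne_zero {a : E.CL K t} {x : E.V} (ha : a * E.clvtx K t x ≠ 0)
    (hx : {e : E.Edge | E.s e = x}.Finite) (hq : E.ck2Defect K t x hx = 0) :
    ∃ e, E.s e = x ∧ a * E.cledg K t e ≠ 0 := by
  by_contra! h
  refine ha ?_
  rw [clvtx_eq_ck2Defect_add hx, hq, zero_add, Finset.mul_sum]
  exact Finset.sum_eq_zero fun e he => by
    rw [← mul_assoc, h e (hx.mem_toFinset.1 he), zero_mul]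

lemma exists_isPathFrom_clPath_ne_zero (hrow : ∀ v : E.V, {e : E.Edge | E.s e = v}.Finite)
    (hq : ∀ x, E.ck2Defect K t x (hrow x) = 0) {u : E.V}
    (hu : E.clvtx K t u ≠ 0) (n : ℕ) :
    ∃ x g, E.IsPathFrom u x g ∧ g.length = n ∧ E.clPath K t u g ≠ 0 := by
  induction n with
  | zero => exact ⟨u, [], rfl, rfl, by rwa [clPath_nil]⟩
  | succ n ih =>
    obtain ⟨x, g, hg, hlen, hg0⟩ := ih
    obtain ⟨e, he, he0⟩ :=
      exists_mul_cledg_ne_zero (by rwa [clPath_mul_clvtx hg]) (hrow x) (hq x)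
    refine ⟨E.r e, g ++ [e], hg.append ⟨he, rfl⟩, by simp [hlen], ?_⟩
    rwa [clPath_concat hg he]

section Prime

variable [Fintype E.V]

lemma exists_clvtx_ne_zero (hprime : IsPrimeSet (E.clSub K t : Set (E.CL K t))) :
    ∃ u, E.clvtx K t u ≠ 0 := by
  obtain ⟨a, ha, ha0⟩ := hprime.1
  by_contra! h
  rw [← clOne_mul ha, clOne_eq_sum, Finset.sum_eq_zero fun u _ => h u, zero_mul] at ha0
  exact ha0 rfl

/-- Primeness applied to `w A (z - c) = w (z - c) A = 0`. -/
lemma eq_smul_clOne_of_mul_eq_smul (hprime : IsPrimeSet (E.clSub K t : Set (E.CL K t)))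
    {z w : E.CL K t} (hzc : z ∈ E.clCenter K t)
    (hw : w ∈ E.clSub K t) (hw0 : w ≠ 0) {c : K} (h : z * w = c • w) :
    z = c • E.clOne K t := by
  have hy : z - c • E.clOne K t ∈ E.clCenter K t :=
    ⟨sub_mem hzc.1 (smul_clOne_mem_clCenter c).1, fun a ha => by
      rw [mul_sub, sub_mul, hzc.2 a ha, (smul_clOne_mem_clCenter c).2 a ha]⟩
  have hyw : (z - c • E.clOne K t) * w = 0 := by
    rw [sub_mul, h, smul_mul_assoc, clOne_mul hw, sub_self]
  refine sub_eq_zero.1 ((hprime.2 w hw _ hy.1 fun x hx => ?_).resolve_left hw0)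
  rw [mul_assoc, hy.2 x hx, ← mul_assoc, hy.2 w hw, hyw, zero_mul]

lemma exists_eq_smul_clOne_of_isPrimeSet
    (hrow : ∀ v : E.V, {e : E.Edge | E.s e = v}.Finite)
    (hprime : IsPrimeSet (E.clSub K t : Set (E.CL K t))) {z : E.CL K t}
    (hzc : z ∈ E.clCenter K t) (hz0 : z ∈ E.clDeg0 K t) : ∃ c : K, z = c • E.clOne K t := by
  by_cases hq : ∃ x, E.ck2Defect K t x (hrow x) ≠ 0
  · obtain ⟨x, hx⟩ := hq
    obtain ⟨c, hc⟩ := Submodule.mem_span_singleton.1 (mul_ck2Defect_mem (hrow x) hzc)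
    exact ⟨c, eq_smul_clOne_of_mul_eq_smul hprime hzc (ck2Defect_mem _) hx hc.symm⟩
  · push Not at hq
    obtain ⟨u, hu⟩ := exists_clvtx_ne_zero hprime
    obtain ⟨n, hn⟩ := mul_clvtx_mem_of_mem_clDeg0 hzc hz0
    obtain ⟨x, g, hg, hlen, hg0⟩ := exists_isPathFrom_clPath_ne_zero hrow hq hu n
    obtain ⟨c, hc⟩ := Submodule.mem_span_singleton.1 (hn u x g hg hlen.ge)
    have hx : E.clvtx K t x ≠ 0 := fun h0 => hg0 (by rw [← clPath_mul_clvtx hg, h0, mul_zero])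
    exact ⟨c, eq_smul_clOne_of_mul_eq_smul hprime hzc (clvtx_mem x) hx hc.symm⟩

end Prime

section FiniteDimensional

variable (E) in
def IsRangeOfLongPaths (x : E.V) : Prop :=
  ∀ n : ℕ, ∃ x₀ g, E.IsPathFrom x₀ x g ∧ n ≤ g.length

variable (E) in
def ShortSucc (y v : E.V) : Prop :=
  ¬ E.IsRangeOfLongPaths y ∧ ∃ e, E.s e = v ∧ E.r e = y

lemma isRangeOfLongPaths_of_isPathFrom_self {v : E.V} {c : List E.Edge}
    (hc : E.IsPathFrom v v c) (hne : c ≠ []) : E.IsRangeOfLongPaths v := by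
  intro n
  induction n with
  | zero => exact ⟨v, [], rfl, le_rfl⟩
  | succ n ih =>
    obtain ⟨x₀, g, hg, hlen⟩ := ih
    have := List.length_pos_of_ne_nil hne
    exact ⟨x₀, g ++ c, hg.append hc, by rw [List.length_append]; omega⟩

lemma exists_isPathFrom_of_transGen_shortSucc {y v : E.V}
    (h : Relation.TransGen E.ShortSucc y v) :
    ¬ E.IsRangeOfLongPaths y ∧ ∃ g ≠ [], E.IsPathFrom v y g := by
  induction h with
  | single h =>
    obtain ⟨hy, e, he, rfl⟩ := h
    exact ⟨hy, [e], List.cons_ne_nil _ _, he, rfl⟩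
  | tail _ hbc ih =>
    obtain ⟨-, e, he, rfl⟩ := hbc
    obtain ⟨hy, g, -, hg⟩ := ih
    exact ⟨hy, e :: g, List.cons_ne_nil _ _, he, hg⟩

/-- A cycle of short successors would make its vertices ranges of long paths. -/
lemma wellFounded_shortSucc [Finite E.V] : WellFounded E.ShortSucc := by
  have : Std.Irrefl (Relation.TransGen E.ShortSucc) := ⟨fun v hv => by
    obtain ⟨hv, g, hg0, hg⟩ := exists_isPathFrom_of_transGen_shortSucc hv
    exact hv (isRangeOfLongPaths_of_isPathFrom_self hg hg0)⟩
  exact Subrelation.wf Relation.TransGen.single (Finite.wellFounded_of_trans_of_irrefl _)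

lemma mul_clvtx_mem_of_isRangeOfLongPaths {z : E.CL K t} (hzc : z ∈ E.clCenter K t)
    (hz0 : z ∈ E.clDeg0 K t) {x : E.V} (hx : E.IsRangeOfLongPaths x) :
    z * E.clvtx K t x ∈ K ∙ E.clvtx K t x := by
  obtain ⟨n, hn⟩ := mul_clvtx_mem_of_mem_clDeg0 hzc hz0
  obtain ⟨x₀, g, hg, hlen⟩ := hx n
  exact hn x₀ x g hg hlen

lemma mul_cledg_mul_clghost {z : E.CL K t} (hzc : z ∈ E.clCenter K t) (e : E.Edge) :
    z * (E.cledg K t e * E.clghost K t e) =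
      E.cledg K t e * (z * E.clvtx K t (E.r e)) * E.clghost K t e := by
  rw [← mul_assoc, ← hzc.2 _ (cledg_mem e), mul_assoc, mul_assoc, mul_assoc,
    clvtx_mul_clghost, if_pos rfl]

/-- `z v = z q_v + Σ_{s(e)=v} e (z r(e)) e*` recurses along short successors. -/
lemma eq_of_mul_ck2Defect_eq [Fintype E.V] (hrow : ∀ v : E.V, {e : E.Edge | E.s e = v}.Finite)
    {z z' : E.CL K t} (hz : z ∈ E.clCenter K t) (hz' : z' ∈ E.clCenter K t)
    (hq : ∀ v, z * E.ck2Defect K t v (hrow v) = z' * E.ck2Defect K t v (hrow v))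
    (hlong : ∀ x, E.IsRangeOfLongPaths x → z * E.clvtx K t x = z' * E.clvtx K t x) :
    z = z' := by
  have hv : ∀ v, z * E.clvtx K t v = z' * E.clvtx K t v := fun v =>
    wellFounded_shortSucc.induction (C := fun v => z * E.clvtx K t v = z' * E.clvtx K t v) v
      fun v ih => by
        rw [clvtx_eq_ck2Defect_add (hrow v), mul_add, mul_add, hq v, Finset.mul_sum,
          Finset.mul_sum]
        refine congrArg _ (Finset.sum_congr rfl fun e he => ?_)
        have hre : z * E.clvtx K t (E.r e) = z' * E.clvtx K t (E.r e) := by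
          by_cases h : E.IsRangeOfLongPaths (E.r e)
          · exact hlong _ h
          · exact ih _ ⟨h, e, (hrow v).mem_toFinset.1 he, rfl⟩
        rw [mul_cledg_mul_clghost hz, mul_cledg_mul_clghost hz', hre]
  rw [← mul_clOne hz.1, ← mul_clOne hz'.1, clOne_eq_sum, Finset.mul_sum, Finset.mul_sum]
  exact Finset.sum_congr rfl fun v _ => hv v

variable (K E t) in
def clCenterDeg0 : Submodule K (E.CL K t) where
  carrier := {z | z ∈ E.clCenter K t ∧ z ∈ E.clDeg0 K t}
  add_mem' := fun ⟨⟨ha, hca⟩, ha0⟩ ⟨⟨hb, hcb⟩, hb0⟩ =>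
    ⟨⟨add_mem ha hb, fun x hx => by rw [mul_add, add_mul, hca x hx, hcb x hx]⟩, add_mem ha0 hb0⟩
  zero_mem' := ⟨⟨zero_mem _, fun x _ => by rw [mul_zero, zero_mul]⟩, zero_mem _⟩
  smul_mem' := fun c _ ⟨⟨hz, hcz⟩, hz0⟩ =>
    ⟨⟨SMulMemClass.smul_mem c hz, fun x hx => by rw [mul_smul_comm, smul_mul_assoc, hcz x hx]⟩,
      Submodule.smul_mem _ c hz0⟩

/-- `Z(A)₀` embeds into `K^{E⁰} × K^X`, `X` the ranges of long paths, via the scalars by which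
`z` acts on the `q_v` and on the `x ∈ X`. -/
lemma finite_clCenterDeg0 [Fintype E.V] (hrow : ∀ v : E.V, {e : E.Edge | E.s e = v}.Finite) :
    Module.Finite K (E.clCenterDeg0 K t) := by
  choose φ hφ using fun v =>
    exists_dual_smul_eq_of_mem_span_singleton (K := K) (E.ck2Defect K t v (hrow v))
  choose ψ hψ using fun x => exists_dual_smul_eq_of_mem_span_singleton (K := K) (E.clvtx K t x)
  let ι := (E.clCenterDeg0 K t).subtype
  let Φ : E.clCenterDeg0 K t →ₗ[K] (E.V → K) × ({x // E.IsRangeOfLongPaths x} → K) :=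
    LinearMap.prod
      (LinearMap.pi fun v => φ v ∘ₗ LinearMap.mulRight K (E.ck2Defect K t v (hrow v)) ∘ₗ ι)
      (LinearMap.pi fun x => ψ x ∘ₗ LinearMap.mulRight K (E.clvtx K t x) ∘ₗ ι)
  refine Module.Finite.of_injective Φ fun z z' h => Subtype.ext ?_
  refine eq_of_mul_ck2Defect_eq hrow z.2.1 z'.2.1 (fun v => ?_) fun x hx => ?_
  · rw [← hφ v _ (mul_ck2Defect_mem (hrow v) z.2.1), ← hφ v _ (mul_ck2Defect_mem (hrow v) z'.2.1)]
    exact congrArg (· • _) (congrFun (congrArg Prod.fst h) v)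
  · rw [← hψ x _ (mul_clvtx_mem_of_isRangeOfLongPaths z.2.1 z.2.2 hx),
      ← hψ x _ (mul_clvtx_mem_of_isRangeOfLongPaths z'.2.1 z'.2.2 hx)]
    exact congrArg (· • _) (congrFun (congrArg Prod.snd h) ⟨x, hx⟩)

end FiniteDimensional

end DirGraph

/-- Let `E` be a finite row-finite graph and `A = C_K(E)` (`t = false`)
or `L_K(E)` (`t = true`).  If `A` is prime then `Z(A)₀ = K·1`; moreover (for any such `E`)
the degree-zero part `Z(A)₀` of the center is finite-dimensional over `K`. -/
theorem stmt18 (K : Type) [Field K] (E : DirGraph) [Finite E.V]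
    (hrow : ∀ v : E.V, {e : E.Edge | E.s e = v}.Finite) (t : Bool) :
    (IsPrimeSet (E.clSub K t : Set (E.CL K t)) →
      {z : E.CL K t | z ∈ E.clCenter K t ∧ z ∈ E.clDeg0 K t} =
        Set.range fun k : K => k • E.clOne K t) ∧
    (∃ (n : ℕ) (f : Fin n → E.CL K t),
      ∀ z ∈ E.clCenter K t, z ∈ E.clDeg0 K t → z ∈ Submodule.span K (Set.range f)) := by
  have := Fintype.ofFinite E.V
  refine ⟨fun hprime => Set.ext fun z => ⟨fun ⟨hzc, hz0⟩ => ?_, ?_⟩, ?_⟩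
  · obtain ⟨c, rfl⟩ := DirGraph.exists_eq_smul_clOne_of_isPrimeSet hrow hprime hzc hz0
    exact ⟨c, rfl⟩
  · rintro ⟨c, rfl⟩
    exact ⟨DirGraph.smul_clOne_mem_clCenter c, DirGraph.smul_clOne_mem_clDeg0 c⟩
  · obtain ⟨n, f, hf⟩ := Submodule.fg_iff_exists_fin_generating_family.1
      (Module.Finite.iff_fg.1 (DirGraph.finite_clCenterDeg0 (K := K) (t := t) hrow))
    exact ⟨n, f, fun z hzc hz0 => hf ▸ ⟨hzc, hz0⟩⟩
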